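/- arXiv:0911.0278 — 4 statements merged into one kernel-verified Lean document; each statement's English description precedes it below -/
import Mathlib

section
/- In SL(2,ℤ), each element conjugate to the image of XY in PSL(2,ℤ) lifts to a unique element of the conjugacy class of XY in SL(2,ℤ); equivalently, for every g in PSL(2,ℤ) conjugate to XY there is exactly one of its two preimages in SL(2,ℤ) that is conjugate in SL(2,ℤ) to the matrix XY. -/
/-- `SL(2,ℤ)`. -/
abbrev SL2Z := Matrix.SpecialLinearGroup (Fin 2) ℤ

/-- The matrix `X = [[-1,1],[-1,0]]`, of order 3 in `PSL(2,ℤ)`. -/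
def Xm : SL2Z := ⟨!![(-1 : ℤ), 1; -1, 0], by norm_num [Matrix.det_fin_two_of]⟩

/-- The matrix `Y = [[0,-1],[1,0]]`, of order 2 in `PSL(2,ℤ)`. -/
def Ym : SL2Z := ⟨!![(0 : ℤ), -1; 1, 0], by norm_num [Matrix.det_fin_two_of]⟩

/-- The modular group `PSL(2,ℤ) = SL(2,ℤ)/{±1}`. -/
abbrev PSL2Z := SL2Z ⧸ Subgroup.center SL2Z

/-- The canonical projection `SL(2,ℤ) → PSL(2,ℤ)`. -/
def π : SL2Z →* PSL2Z := QuotientGroup.mk' (Subgroup.center SL2Z)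

/-!
A lift of a conjugate `x π(XY) x⁻¹` of `π(XY)` is `±x (XY) x⁻¹`. Conjugation preserves the trace,
and `XY = [[1,1],[0,1]]` has trace `2` while `-XY` has trace `-2`, so `XY` is not conjugate to
`-XY`; hence exactly one of the two lifts is conjugate to `XY`.
-/

namespace QuotientGroup

variable {G : Type*} [Group G] {N : Subgroup G} [N.Normal]

theorem existsUnique_mk_eq_and_isConj {a : G} (ha : ∀ z ∈ N, IsConj a (a * z) → z = 1)
    {g : G ⧸ N} (hg : IsConj (a : G ⧸ N) g) : ∃! b : G, (b : G ⧸ N) = g ∧ IsConj a b := by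
  obtain ⟨d, rfl⟩ := isConj_iff.mp hg
  obtain ⟨x, rfl⟩ := mk_surjective d
  refine ⟨x * a * x⁻¹, ⟨rfl, isConj_iff.mpr ⟨x, rfl⟩⟩, ?_⟩
  rintro c ⟨hc, hac⟩
  have hn : (x * a * x⁻¹)⁻¹ * c ∈ N := QuotientGroup.eq.mp hc.symm
  set n := (x * a * x⁻¹)⁻¹ * c
  have hc' : c = x * (a * (x⁻¹ * n * x)) * x⁻¹ := by simp [n, mul_assoc]
  have hm : x⁻¹ * n * x = 1 := by
    refine ha _ (by simpa using Subgroup.Normal.conj_mem ‹_› n hn x⁻¹) ?_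
    exact hac.trans (hc' ▸ isConj_iff.mpr ⟨x⁻¹, by group⟩)
  rw [hc', hm, mul_one]

end QuotientGroup

namespace Matrix.SpecialLinearGroup

variable {n R : Type*} [Fintype n] [DecidableEq n] [CommRing R]

theorem trace_eq_of_isConj {A B : SpecialLinearGroup n R} (h : IsConj A B) :
    trace (B : Matrix n n R) = trace (A : Matrix n n R) := by
  obtain ⟨c, rfl⟩ := isConj_iff.mp h
  exact trace_units_conj (toGL c) A

theorem eq_one_or_eq_neg_one_of_mem_center [NoZeroDivisors R] {z : SpecialLinearGroup (Fin 2) R}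
    (hz : z ∈ Subgroup.center (SpecialLinearGroup (Fin 2) R)) : z = 1 ∨ z = -1 := by
  obtain ⟨r, hr, hrz⟩ := mem_center_iff.mp hz
  rcases sq_eq_one_iff.mp (by simpa only [Fintype.card_fin] using hr) with rfl | rfl
  · exact .inl (Subtype.ext (by rw [← hrz, map_one, coe_one]))
  · exact .inr (Subtype.ext (by rw [← hrz, map_neg, map_one, coe_neg, coe_one]))

theorem eq_one_of_mem_center_of_isConj_mul [NoZeroDivisors R] {A z : SpecialLinearGroup (Fin 2) R}
    (hA : trace (A : Matrix (Fin 2) (Fin 2) R) ≠ -trace (A : Matrix (Fin 2) (Fin 2) R))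
    (hz : z ∈ Subgroup.center (SpecialLinearGroup (Fin 2) R)) (hAz : IsConj A (A * z)) : z = 1 := by
  refine (eq_one_or_eq_neg_one_of_mem_center hz).resolve_right fun hz' => hA ?_
  simpa [hz', coe_neg, trace_neg] using (trace_eq_of_isConj hAz).symm

end Matrix.SpecialLinearGroup

theorem trace_Xm_mul_Ym : Matrix.trace ((Xm * Ym : SL2Z) : Matrix (Fin 2) (Fin 2) ℤ) = 2 := by
  decide

theorem stmt_7 (g : PSL2Z) (hg : IsConj (π (Xm * Ym)) g) :
    ∃! h : SL2Z, π h = g ∧ IsConj (Xm * Ym) h :=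
  QuotientGroup.existsUnique_mk_eq_and_isConj
    (fun _ hz hconj => Matrix.SpecialLinearGroup.eq_one_of_mem_center_of_isConj_mul
      (by rw [trace_Xm_mul_Ym]; decide) hz hconj) hg
end

section
/- The two simple B₃-valued braid monodromy factorizations (σ₁²σ₂σ₁⁻², σ₂) and (σ₁σ₂σ₁⁻¹, σ₁⁻¹σ₂σ₁) have the same product m₂·m₁ (monodromy at infinity) and are weakly Hurwitz equivalent (they are globally conjugate), but are not strongly Hurwitz equivalent. -/
/-- The braid relation `σ₁σ₂σ₁ = σ₂σ₁σ₂` as a relator in the free group on two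
generators. -/
def braidRel : Set (FreeGroup (Fin 2)) :=
  {FreeGroup.of 0 * FreeGroup.of 1 * FreeGroup.of 0 *
    (FreeGroup.of 1 * FreeGroup.of 0 * FreeGroup.of 1)⁻¹}

/-- The braid group `B₃ = ⟨σ₁,σ₂ | σ₁σ₂σ₁ = σ₂σ₁σ₂⟩`. -/
abbrev B3 := PresentedGroup braidRel

/-- The standard generator `σ₁` of `B₃`. -/
def σ₁ : B3 := PresentedGroup.of 0

/-- The standard generator `σ₂` of `B₃`. -/
def σ₂ : B3 := PresentedGroup.of 1

/-- A single Hurwitz move on a braid monodromy factorization, recorded as a list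
`(m₁, …, m_r)` of elements of `G`: `(…, m_i, m_{i+1}, …) ↦ (…, m_i⁻¹ m_{i+1} m_i, m_i, …)`. -/
inductive HurwitzMove {G : Type*} [Group G] : List G → List G → Prop
  | mk (l₁ l₂ : List G) (a b : G) :
      HurwitzMove (l₁ ++ a :: b :: l₂) (l₁ ++ (a⁻¹ * b * a) :: a :: l₂)

/-- Strong Hurwitz equivalence: the equivalence relation generated by Hurwitz moves
and their inverses. -/
def StrongEq {G : Type*} [Group G] : List G → List G → Prop :=
  Relation.EqvGen HurwitzMove

/-- Weak Hurwitz equivalence: additionally allows global conjugation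
`(m_i) ↦ (g⁻¹ m_i g)`. -/
def WeakEq {G : Type*} [Group G] : List G → List G → Prop :=
  Relation.EqvGen fun x y =>
    HurwitzMove x y ∨ ∃ g : G, y = x.map fun m => g⁻¹ * m * g

/-- The factorization `(σ₁²σ₂σ₁⁻², σ₂)`. -/
def fact₁ : List B3 := [σ₁ ^ 2 * σ₂ * (σ₁ ^ 2)⁻¹, σ₂]

/-- The factorization `(σ₁σ₂σ₁⁻¹, σ₁⁻¹σ₂σ₁)`. -/
def fact₂ : List B3 := [σ₁ * σ₂ * σ₁⁻¹, σ₁⁻¹ * σ₂ * σ₁]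

/-!
Hurwitz moves do not change the subgroup generated by the entries of a factorization. Under the
permutation representation `B₃ → S₃`, `σ₁ ↦ (0 1)`, `σ₂ ↦ (1 2)`, both entries of `fact₂` go to
`(0 2)`, so the monodromy group of `fact₂` fixes the point `1`, while it would contain `σ₂` (an
entry of `fact₁`), which moves `1`, if the two were strongly equivalent. Weak equivalence is the
global conjugation by `σ₁`, and the equality of the products follows from the braid relation.
-/

theorem σ₁_mul_σ₂_mul_σ₁ : σ₁ * σ₂ * σ₁ = σ₂ * σ₁ * σ₂ := by
  have h := PresentedGroup.mk_eq_mk_of_mul_inv_mem (rels := braidRel) (Set.mem_singleton _)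
  simp only [map_mul] at h
  exact h

section Monodromy

variable {G : Type*} [Group G]

def monodromyGroup (l : List G) : Subgroup G :=
  Subgroup.closure {g | g ∈ l}

theorem mem_monodromyGroup {l : List G} {g : G} (hg : g ∈ l) : g ∈ monodromyGroup l :=
  Subgroup.subset_closure hg

theorem monodromyGroup_le_iff {l : List G} {H : Subgroup G} :
    monodromyGroup l ≤ H ↔ ∀ g ∈ l, g ∈ H :=
  Subgroup.closure_le H

theorem HurwitzMove.monodromyGroup_eq {x y : List G} (h : HurwitzMove x y) :
    monodromyGroup x = monodromyGroup y := by
  obtain ⟨l₁, l₂, a, b⟩ := h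
  apply le_antisymm <;> refine monodromyGroup_le_iff.mpr fun g hg => ?_ <;>
    simp only [List.mem_append, List.mem_cons] at hg
  · set H := monodromyGroup (l₁ ++ (a⁻¹ * b * a) :: a :: l₂)
    have ha : a ∈ H := mem_monodromyGroup (by simp)
    have hc : a⁻¹ * b * a ∈ H := mem_monodromyGroup (by simp)
    rcases hg with hg | rfl | rfl | hg
    · exact mem_monodromyGroup (by simp [hg])
    · exact ha
    · simpa [mul_assoc] using H.mul_mem (H.mul_mem ha hc) (H.inv_mem ha)
    · exact mem_monodromyGroup (by simp [hg])
  · set K := monodromyGroup (l₁ ++ a :: b :: l₂)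
    have ha : a ∈ K := mem_monodromyGroup (by simp)
    have hb : b ∈ K := mem_monodromyGroup (by simp)
    rcases hg with hg | rfl | rfl | hg
    · exact mem_monodromyGroup (by simp [hg])
    · exact K.mul_mem (K.mul_mem (K.inv_mem ha) hb) ha
    · exact ha
    · exact mem_monodromyGroup (by simp [hg])

theorem StrongEq.monodromyGroup_eq {x y : List G} (h : StrongEq x y) :
    monodromyGroup x = monodromyGroup y := by
  induction h with
  | rel _ _ h => exact h.monodromyGroup_eq
  | refl => rfl
  | symm _ _ _ ih => exact ih.symm
  | trans _ _ _ _ _ ih₁ ih₂ => exact ih₁.trans ih₂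

end Monodromy

def toPerm3 : B3 →* Equiv.Perm (Fin 3) :=
  PresentedGroup.toGroup (f := ![Equiv.swap 0 1, Equiv.swap 1 2]) <| by
    simp only [braidRel, Set.mem_singleton_iff, forall_eq, map_mul, map_inv,
      FreeGroup.lift_apply_of]
    decide

theorem toPerm3_σ₁ : toPerm3 σ₁ = Equiv.swap 0 1 := PresentedGroup.toGroup.of _
theorem toPerm3_σ₂ : toPerm3 σ₂ = Equiv.swap 1 2 := PresentedGroup.toGroup.of _

theorem monodromyGroup_fact₂_le :
    monodromyGroup fact₂ ≤
      (MulAction.stabilizer (Equiv.Perm (Fin 3)) (1 : Fin 3)).comap toPerm3 := by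
  simp only [monodromyGroup_le_iff, fact₂, List.forall_mem_cons,
    Subgroup.mem_comap, MulAction.mem_stabilizer_iff, map_mul, map_inv, toPerm3_σ₁, toPerm3_σ₂]
  decide

theorem not_strongEq_fact₁_fact₂ : ¬ StrongEq fact₁ fact₂ := by
  intro h
  have hσ₂ : σ₂ ∈ monodromyGroup fact₂ :=
    h.monodromyGroup_eq ▸ mem_monodromyGroup (by simp [fact₁])
  have := monodromyGroup_fact₂_le hσ₂
  rw [Subgroup.mem_comap, MulAction.mem_stabilizer_iff, toPerm3_σ₂] at this
  exact absurd this (by decide)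

theorem fact₂_eq_map_conj : fact₂ = fact₁.map (fun m => σ₁⁻¹ * m * σ₁) := by
  simp only [fact₁, fact₂, List.map_cons, List.map_nil, List.cons.injEq, and_true]
  group

theorem σ₂_mul_conj_eq : σ₂ * (σ₁ ^ 2 * σ₂ * (σ₁ ^ 2)⁻¹) =
      (σ₁⁻¹ * σ₂ * σ₁) * (σ₁ * σ₂ * σ₁⁻¹) := by
  have h : σ₁ * σ₂ * σ₁ * (σ₁ * σ₂) = σ₂ * σ₁ * (σ₁ * σ₂ * σ₁) := by
    rw [σ₁_mul_σ₂_mul_σ₁]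
    simp only [mul_assoc]
  calc σ₂ * (σ₁ ^ 2 * σ₂ * (σ₁ ^ 2)⁻¹)
      = σ₁⁻¹ * (σ₁ * σ₂ * σ₁ * (σ₁ * σ₂)) * (σ₁ ^ 2)⁻¹ := by rw [sq]; group
    _ = σ₁⁻¹ * (σ₂ * σ₁ * (σ₁ * σ₂ * σ₁)) * (σ₁ ^ 2)⁻¹ := by rw [h]
    _ = (σ₁⁻¹ * σ₂ * σ₁) * (σ₁ * σ₂ * σ₁⁻¹) := by group

theorem stmt_9 :
    -- same monodromy at infinity `m₂ · m₁`
    σ₂ * (σ₁ ^ 2 * σ₂ * (σ₁ ^ 2)⁻¹) =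
      (σ₁⁻¹ * σ₂ * σ₁) * (σ₁ * σ₂ * σ₁⁻¹) ∧
    -- globally conjugate (hence weakly equivalent) …
    fact₂ = fact₁.map (fun m => σ₁⁻¹ * m * σ₁) ∧
    WeakEq fact₁ fact₂ ∧
    -- … but not strongly equivalent
    ¬ StrongEq fact₁ fact₂ :=
  ⟨σ₂_mul_conj_eq, fact₂_eq_map_conj, .rel _ _ (.inr ⟨σ₁, fact₂_eq_map_conj⟩),
    not_strongEq_fact₁_fact₂⟩
end

section
/- Let R be a commutative ring, L an R-module with a V-valued skew-symmetric form, and (m₁,…,m_r) symplectic automorphisms of L. Define q: L^r → V by q(⊕x_i) = −Σᵢ x_i · m_i x_i + Σ_{i<j} (m_i−1)x_i · (m_j−1)x_j, and χ(⊕x_i) = Σᵢ(m_i−1)x_i. Then for all x, y ∈ L^r one has q(x+y) − q(x) − q(y) ≡ χ(x)·χ(y) modulo 2V. -/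
open Finset

/-- `χ(⊕xᵢ) = Σᵢ (mᵢ − 1)xᵢ`. -/
def chiFun {R L : Type*} [CommRing R] [AddCommGroup L] [Module R L] {r : ℕ}
    (m : Fin r → (L ≃ₗ[R] L)) (x : Fin r → L) : L :=
  ∑ i, (m i (x i) - x i)

/-- `q(⊕xᵢ) = −Σᵢ xᵢ·mᵢxᵢ + Σ_{i<j} (mᵢ−1)xᵢ·(mⱼ−1)xⱼ`. -/
def qFun {R L V : Type*} [CommRing R] [AddCommGroup L] [Module R L]
    [AddCommGroup V] [Module R V] (B : L →ₗ[R] L →ₗ[R] V) {r : ℕ}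
    (m : Fin r → (L ≃ₗ[R] L)) (x : Fin r → L) : V :=
  -∑ i, B (x i) (m i (x i)) +
    ∑ i, ∑ j ∈ Ioi i, B (m i (x i) - x i) (m j (x j) - x j)

/-- Decompose a double sum into diagonal and ordered off-diagonal parts. -/
lemma double_sum_split {V : Type*} [AddCommGroup V] {r : ℕ} (f : Fin r → Fin r → V) :
    ∑ i, ∑ j, f i j = ∑ i, f i i + ∑ i, ∑ j ∈ Ioi i, (f i j + f j i) := by
  have swap : ∑ i, ∑ j ∈ Iio i, f i j = ∑ i, ∑ j ∈ Ioi i, f j i := by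
    rw [Finset.sum_sigma', Finset.sum_sigma']
    refine Finset.sum_nbij' (fun p => ⟨p.2, p.1⟩) (fun p => ⟨p.2, p.1⟩) ?_ ?_ ?_ ?_ ?_ <;> simp
  have huniv : ∀ i : Fin r, (univ : Finset (Fin r)) = insert i (Ioi i ∪ Iio i) := by
    intro i
    ext j
    simp only [mem_univ, mem_insert, mem_union, mem_Ioi, mem_Iio, true_iff]
    rcases lt_trichotomy i j with h | h | h
    · exact Or.inr (Or.inl h)
    · exact Or.inl h.symm
    · exact Or.inr (Or.inr h)
  have h2 : ∀ i, ∑ j, f i j = f i i + (∑ j ∈ Ioi i, f i j + ∑ j ∈ Iio i, f i j) := by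
    intro i
    rw [huniv i, Finset.sum_insert (by simp), Finset.sum_union]
    exact Finset.disjoint_left.2 fun j hj hj' =>
      lt_asymm (mem_Ioi.1 hj) (mem_Iio.1 hj')
  calc ∑ i, ∑ j, f i j
      = ∑ i, (f i i + (∑ j ∈ Ioi i, f i j + ∑ j ∈ Iio i, f i j)) :=
        Finset.sum_congr rfl fun i _ => h2 i
    _ = ∑ i, f i i + (∑ i, ∑ j ∈ Ioi i, f i j + ∑ i, ∑ j ∈ Iio i, f i j) := by
        rw [Finset.sum_add_distrib, Finset.sum_add_distrib]
    _ = ∑ i, f i i + ∑ i, ∑ j ∈ Ioi i, (f i j + f j i) := by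
        rw [swap]
        simp_rw [Finset.sum_add_distrib]

theorem stmt_13 {R L V : Type*} [CommRing R] [AddCommGroup L] [Module R L]
    [AddCommGroup V] [Module R V] (B : L →ₗ[R] L →ₗ[R] V)
    (hskew : ∀ x : L, B x x = 0) {r : ℕ} (m : Fin r → (L ≃ₗ[R] L))
    (hiso : ∀ (i : Fin r) (x y : L), B (m i x) (m i y) = B x y)
    (x y : Fin r → L) :
    ∃ w : V,
      (qFun B m (x + y) - qFun B m x - qFun B m y) -
        B (chiFun m x) (chiFun m y) = w + w := by
  have skew : ∀ u v : L, B v u = -B u v := by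
    intro u v
    have h := hskew (u + v)
    simp only [map_add, LinearMap.add_apply, hskew] at h
    have h' : B u v + B v u = 0 := by rw [← h]; abel
    exact eq_neg_of_add_eq_zero_right h'
  refine ⟨∑ i, (B (m i (x i)) (y i) - B (x i) (y i)) +
      ∑ i, ∑ j ∈ Ioi i, -(B (m j (x j) - x j) (m i (y i) - y i)), ?_⟩
  have hchi : B (chiFun m x) (chiFun m y)
      = ∑ i, ∑ j, B (m i (x i) - x i) (m j (y j) - y j) := by
    simp [chiFun, map_sum, Finset.sum_apply', LinearMap.sum_apply]
  rw [hchi, double_sum_split (fun i j => B (m i (x i) - x i) (m j (y j) - y j))]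
  simp only [qFun, Pi.add_apply]
  have key1 :
      (-∑ i, B (x i + y i) (m i (x i + y i))) + (∑ i, B (x i) (m i (x i)))
        + (∑ i, B (y i) (m i (y i)))
        - ∑ i, B (m i (x i) - x i) (m i (y i) - y i)
      = (∑ i, (B (m i (x i)) (y i) - B (x i) (y i)))
        + ∑ i, (B (m i (x i)) (y i) - B (x i) (y i)) := by
    rw [← Finset.sum_neg_distrib, ← Finset.sum_add_distrib, ← Finset.sum_add_distrib,
      ← Finset.sum_sub_distrib, ← Finset.sum_add_distrib]
    refine Finset.sum_congr rfl fun i _ => ?_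
    simp only [Pi.add_apply, map_add, map_sub, LinearMap.add_apply, LinearMap.sub_apply,
      hiso]
    rw [skew (m i (x i)) (y i)]
    abel
  have key2 :
      (∑ i, ∑ j ∈ Ioi i, B (m i (x i + y i) - (x i + y i)) (m j (x j + y j) - (x j + y j)))
        - (∑ i, ∑ j ∈ Ioi i, B (m i (x i) - x i) (m j (x j) - x j))
        - (∑ i, ∑ j ∈ Ioi i, B (m i (y i) - y i) (m j (y j) - y j))
        - ∑ i, ∑ j ∈ Ioi i, (B (m i (x i) - x i) (m j (y j) - y j)
            + B (m j (x j) - x j) (m i (y i) - y i))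
      = (∑ i, ∑ j ∈ Ioi i, -(B (m j (x j) - x j) (m i (y i) - y i)))
        + ∑ i, ∑ j ∈ Ioi i, -(B (m j (x j) - x j) (m i (y i) - y i)) := by
    rw [← Finset.sum_sub_distrib, ← Finset.sum_sub_distrib, ← Finset.sum_sub_distrib,
      ← Finset.sum_add_distrib]
    refine Finset.sum_congr rfl fun i _ => ?_
    rw [← Finset.sum_sub_distrib, ← Finset.sum_sub_distrib, ← Finset.sum_sub_distrib,
      ← Finset.sum_add_distrib]
    refine Finset.sum_congr rfl fun j _ => ?_
    have hab : ∀ u v : L, ∀ k : Fin r, m k ((u + v)) = m k u + m k v := fun u v k => map_add _ u v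
    simp only [Pi.add_apply, map_add, map_sub, LinearMap.add_apply, LinearMap.sub_apply]
    rw [skew (m j (x j)) (m i (y i)), skew (m j (x j)) (y i),
      skew (x j) (m i (y i)), skew (x j) (y i)]
    abel
  have expand : ∀ A1 A2 A3 A4 A5 A6 D E : V,
      (-A1 + A2 - (-A3 + A4) - (-A5 + A6)) - (D + E)
        = (-A1 + A3 + A5 - D) + (A2 - A4 - A6 - E) := by
    intros; abel
  rw [expand]
  rw [key1, key2]
  abel
end

section
/- An automorphism of a connected 3-regular ribbon graph (a 3-skeleton) arising from an admissible tree (a pseudo-tree) has order at most 3; i.e., |Aut(Sk_Ξ)| ≤ 3 for every pseudo-tree Sk_Ξ. Moreover, Aut(Sk_Ξ) acts freely on the set of edge ends of Sk_Ξ. -/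
/-- A (finite) 3-regular ribbon graph together with connectedness: a 3-skeleton.
`E` is the set of ends of edges, `op` is a free involution (sending an end to the
other end of the same edge) and `nx` is a free automorphism of order 3 (the next
end at the same vertex in the cyclic order). -/
structure ThreeSkeleton where
  E : Type
  fintypeE : Fintype E
  op : Equiv.Perm E
  nx : Equiv.Perm E
  op_free : ∀ e, op e ≠ e
  op_invol : ∀ e, op (op e) = e
  nx_free : ∀ e, nx e ≠ e
  nx_order : ∀ e, nx (nx (nx e)) = e
  connected : ∀ e e' : E,
    ∃ g ∈ Subgroup.closure ({op, nx} : Set (Equiv.Perm E)), g e = e'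

/-- The permutation whose orbits are the faces (regions) of the ribbon graph. -/
def ThreeSkeleton.z (Sk : ThreeSkeleton) : Equiv.Perm Sk.E :=
  Sk.op.trans Sk.nx.symm

/-- A pseudo-tree: a 3-skeleton obtained from an admissible plane tree by attaching
a loop at each leaf.  Combinatorially: all faces except exactly one are monogonal
(fixed points of `z`), and the Euler characteristic is that of the sphere, i.e.
with `|E| = 6n` there are `n + 1` monogonal faces, so `6·#fix(z) = |E| + 6`. -/
def IsPseudoTree (Sk : ThreeSkeleton) : Prop :=
  (∃ e₀ : Sk.E, Sk.z e₀ ≠ e₀ ∧ ∀ e : Sk.E, Sk.z e = e ∨ Sk.z.SameCycle e₀ e) ∧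
  6 * Nat.card {e : Sk.E // Sk.z e = e} = Nat.card Sk.E + 6

/-- The automorphism group of a ribbon graph: permutations of the set of edge ends
commuting with both `op` and `nx`. -/
def ribbonAut (Sk : ThreeSkeleton) : Subgroup (Equiv.Perm Sk.E) :=
  Subgroup.centralizer ({Sk.op, Sk.nx} : Set (Equiv.Perm Sk.E))

/-!
Automorphisms commute with the transitive group generated by `op` and `nx`, so they act freely on
the ends; they also commute with `z`, so they act freely on the monogonal faces `Fix z` as well, and
`|Aut|` divides `6 |Fix z| - |E| = 6`. Preserving the unique non-monogonal face and commuting with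
`z`, they act on it by powers of `z`, so `Aut` is abelian.

It remains to rule out even order. Take an involution `ψ ∈ Aut` and the quotient graph by `ψ`. It is
connected, so its vertex-edge incidence graph has at least `#vertices + #edges - 1` incidences,
while loops and edges flipped by `ψ` carry a single incidence. With the Euler relation
`6 |Fix z| = |E| + 6` and `2 ∣ |Fix z|` this forces `ψ` to flip exactly one edge (the middle edge of
the tree). Since `Aut` is abelian, it permutes the two ends of that edge freely, so `|Aut| ∣ 2`.
-/

open Equiv MulAction Subgroup Function

section FreeAction

variable {G X : Type*} [Group G] [MulAction G X]

theorem MulAction.card_subtype_mk_eq_of_free (hfree : ∀ (g : G) (x : X), g • x = x → g = 1)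
    (P : orbitRel.Quotient G X → Prop) :
    Nat.card {x : X // P (Quotient.mk _ x)} = Nat.card {q // P q} * Nat.card G := by
  have hstab (x : X) : stabilizer G x = ⊥ :=
    (Subgroup.eq_bot_iff_forall _).2 fun g hg => hfree g x hg
  rw [← Nat.card_prod]
  exact Nat.card_congr <|
    ((selfEquivOrbitsQuotientProd hstab).subtypeEquiv fun _ => Iff.rfl).trans
      prodSubtypeFstEquivSubtypeProd

theorem MulAction.card_eq_of_free (hfree : ∀ (g : G) (x : X), g • x = x → g = 1) :
    Nat.card X = Nat.card (orbitRel.Quotient G X) * Nat.card G := by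
  simpa using card_subtype_mk_eq_of_free hfree fun _ => True

theorem MulAction.card_dvd_card_subtype_of_free (hfree : ∀ (g : G) (x : X), g • x = x → g = 1)
    {p : X → Prop} (hp : ∀ (g : G) (x : X), p (g • x) ↔ p x) :
    Nat.card G ∣ Nat.card {x // p x} := by
  have hout (x : X) : p (Quotient.mk (orbitRel G X) x).out ↔ p x := by
    obtain ⟨g, hg⟩ := Quotient.mk_out (s := orbitRel G X) x
    rw [← hg, hp]
  rw [Nat.card_congr (Equiv.subtypeEquivRight fun x => (hout x).symm)]
  exact Dvd.intro_left _ (card_subtype_mk_eq_of_free hfree fun q => p q.out).symm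

end FreeAction

namespace Equiv.Perm

variable {X : Type*}

theorem orbitRel_zpowers_iff (σ : Perm X) (a b : X) :
    orbitRel (zpowers σ) X a b ↔ ∃ k : ℤ, (σ ^ k) b = a := by
  rw [orbitRel_apply, mem_orbit_iff, Subgroup.exists_zpowers]
  rfl

theorem orbitRel_zpowers_iff_of_sq_eq_one {σ : Perm X} (hσ : σ ^ 2 = 1) (a b : X) :
    orbitRel (zpowers σ) X a b ↔ a = b ∨ a = σ b := by
  rw [orbitRel_zpowers_iff]
  constructor
  · rintro ⟨k, rfl⟩
    rw [zpow_eq_zpow_emod k (n := 2) (mod_cast hσ)]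
    rcases Int.emod_two_eq_zero_or_one k with h | h <;> simp [h]
  · rintro (rfl | rfl)
    exacts [⟨0, rfl⟩, ⟨1, by simp⟩]

theorem mk_apply_eq_mk (σ : Perm X) (x : X) :
    (Quotient.mk (orbitRel (zpowers σ) X) (σ x)) = Quotient.mk _ x :=
  Quotient.sound <| (orbitRel_zpowers_iff σ _ _).2 ⟨1, by simp⟩

def descend (σ u : Perm X) (hu : Commute u σ) : Perm (orbitRel.Quotient (zpowers σ) X) :=
  Quotient.congr u fun a b => by
    simp only [orbitRel_zpowers_iff]
    refine exists_congr fun k => ?_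
    rw [← Perm.mul_apply, ← (hu.zpow_right k).eq, Perm.mul_apply, u.injective.eq_iff]

@[simp]
theorem descend_mk (σ u : Perm X) (hu : Commute u σ) (x : X) :
    σ.descend u hu (Quotient.mk _ x) = Quotient.mk _ (u x) := rfl

theorem card_orbits_zpowers_mul_orderOf [Finite X] (σ : Perm X) :
    Nat.card (orbitRel.Quotient (zpowers σ) X) * orderOf σ =
      ∑ k ∈ Finset.range (orderOf σ), Nat.card {x // (σ ^ k) x = x} := by
  have hσ : IsOfFinOrder σ := isOfFinOrder_of_finite σ
  have := Fintype.ofFinite (zpowers σ)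
  have hburnside := Nat.card_congr (sigmaFixedByEquivOrbitsProdGroup (zpowers σ) X)
  rw [Nat.card_prod, Nat.card_zpowers, Nat.card_sigma] at hburnside
  rw [← hburnside, ← Fin.sum_univ_eq_sum_range, ← (finEquivZPowers hσ).sum_comp]
  simp only [finEquivZPowers_apply]
  rfl

theorem two_mul_card_orbits_zpowers [Finite X] {σ : Perm X} (hσ : σ ^ 2 = 1) :
    2 * Nat.card (orbitRel.Quotient (zpowers σ) X) = Nat.card X + Nat.card {x // σ x = x} := by
  have hburnside := card_orbits_zpowers_mul_orderOf σ
  rcases (Nat.dvd_prime Nat.prime_two).1 (orderOf_dvd_of_pow_eq_one hσ) with h1 | h2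
  · rw [orderOf_eq_one_iff.1 h1] at hburnside ⊢
    simp only [orderOf_one, mul_one, Finset.range_one, one_pow, coe_one, id_eq,
      Nat.card_subtype_true, Finset.sum_const, Finset.card_singleton, smul_eq_mul,
      one_mul] at hburnside ⊢
    omega
  · rw [h2, Finset.sum_range_succ, Finset.sum_range_one] at hburnside
    simpa [mul_comm] using hburnside

theorem card_eq_prime_mul_card_orbits_zpowers {σ : Perm X} {p : ℕ} [Fact p.Prime]
    (hσp : σ ^ p = 1) (hσ : ∀ x, σ x ≠ x) :
    Nat.card X = p * Nat.card (orbitRel.Quotient (zpowers σ) X) := by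
  rcases isEmpty_or_nonempty X with hX | ⟨⟨x₀⟩⟩
  · simp
  have hord : orderOf σ = p := orderOf_eq_prime hσp fun h => hσ x₀ (by simp [h])
  have : Fact (Nat.card (zpowers σ)).Prime := by rwa [Nat.card_zpowers, hord]
  rw [card_eq_of_free (G := zpowers σ), Nat.card_zpowers, hord, mul_comm]
  intro g x hgx
  rcases (stabilizer (zpowers σ) x).eq_bot_or_eq_top_of_prime_card with hbot | htop
  · simpa [hbot] using (mem_stabilizer_iff.2 hgx : g ∈ stabilizer (zpowers σ) x)
  · have : (⟨σ, mem_zpowers σ⟩ : zpowers σ) ∈ stabilizer (zpowers σ) x := htop ▸ mem_top _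
    exact absurd this (hσ x)

theorem eq_one_of_mem_centralizer_of_apply_eq_self {S : Set (Perm X)}
    (htrans : ∀ x y, ∃ γ ∈ closure S, γ x = y) {φ : Perm X} (hφ : φ ∈ centralizer S) {x : X}
    (hx : φ x = x) : φ = 1 := by
  ext y
  obtain ⟨γ, hγ, rfl⟩ := htrans x y
  have hcomm : φ * γ = γ * φ :=
    mem_centralizer_iff.1 (closure_le_centralizer_centralizer S hγ) φ hφ
  rw [Perm.one_apply, ← Perm.mul_apply, hcomm, Perm.mul_apply, hx]

theorem SameCycle.apply_apply_comm {z φ χ : Perm X} {x : X} (hφ : Commute φ z)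
    (hχ : Commute χ z) (hφx : z.SameCycle x (φ x)) (hχx : z.SameCycle x (χ x)) :
    φ (χ x) = χ (φ x) := by
  obtain ⟨i, hi⟩ := hφx
  obtain ⟨j, hj⟩ := hχx
  calc φ (χ x) = (z ^ j * z ^ i) x := by
        rw [← hj, ← Perm.mul_apply, (hφ.zpow_right j).eq, Perm.mul_apply, Perm.mul_apply, hi]
    _ = (z ^ i * z ^ j) x := by rw [← zpow_add, ← zpow_add, add_comm]
    _ = χ (φ x) := by
        rw [← hi, ← Perm.mul_apply χ, (hχ.zpow_right i).eq, Perm.mul_apply, Perm.mul_apply, hj]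

end Equiv.Perm

theorem Equivalence.apply_of_mem_closure {X : Type*} {r : X → X → Prop} (hr : Equivalence r)
    {S : Set (Perm X)} (hS : ∀ γ ∈ S, ∀ x, r x (γ x)) {γ : Perm X} (hγ : γ ∈ closure S)
    (x : X) : r x (γ x) := by
  induction hγ using closure_induction generalizing x with
  | mem γ hγ => exact hS γ hγ x
  | one => exact hr.refl x
  | mul γ δ _ _ ihγ ihδ => exact hr.trans (ihδ x) (ihγ (δ x))
  | inv γ _ ih => simpa using hr.symm (ih (γ⁻¹ x))

theorem two_mul_card_image_le {X Y : Type*} [Finite X] {ψ : X → X} (hψ : ∀ x, ψ x ≠ x)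
    {h : X → Y} (hh : ∀ x, h (ψ x) = h x) {T : Set X} (hT : ∀ x ∈ T, ψ x ∈ T) :
    2 * Nat.card (h '' T) ≤ Nat.card T := by
  classical
  have := Fintype.ofFinite X
  rw [Nat.card_eq_card_toFinset, Nat.card_eq_card_toFinset, Set.toFinset_image,
    Finset.card_eq_sum_card_image h T.toFinset, mul_comm, ← smul_eq_mul]
  refine Finset.card_nsmul_le_sum _ _ _ fun y hy => ?_
  obtain ⟨x, hx, rfl⟩ := Finset.mem_image.1 hy
  refine Finset.one_lt_card.2 ⟨x, ?_, ψ x, ?_, (hψ x).symm⟩ <;> simp_all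

section IncidenceGraph

variable {X A B : Type*}

def incidenceGraph (f : X → A) (g : X → B) : SimpleGraph (A ⊕ B) :=
  SimpleGraph.fromRel fun u v => ∃ x, u = .inl (f x) ∧ v = .inr (g x)

lemma incidenceGraph_adj (f : X → A) (g : X → B) (x : X) :
    (incidenceGraph f g).Adj (.inl (f x)) (.inr (g x)) :=
  (SimpleGraph.fromRel_adj _ _ _).2 ⟨Sum.inl_ne_inr, .inl ⟨x, rfl, rfl⟩⟩

lemma card_edgeSet_incidenceGraph_le [Finite X] (f : X → A) (g : X → B) :
    Nat.card (incidenceGraph f g).edgeSet ≤ Nat.card (Set.range fun x => (f x, g x)) := by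
  refine Nat.card_le_card_of_surjective
    (fun p => ⟨s(.inl p.1.1, .inr p.1.2), ?_⟩) ?_
  · obtain ⟨_, x, rfl⟩ := p
    exact incidenceGraph_adj f g x
  · rintro ⟨e, he⟩
    induction e using Sym2.ind with | _ u v => ?_
    obtain ⟨-, ⟨x, rfl, rfl⟩ | ⟨x, rfl, rfl⟩⟩ :=
      (SimpleGraph.fromRel_adj _ _ _).1 ((SimpleGraph.mem_edgeSet _).1 he)
    · exact ⟨⟨_, x, rfl⟩, rfl⟩
    · exact ⟨⟨_, x, rfl⟩, Subtype.ext Sym2.eq_swap⟩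

lemma incidenceGraph_connected [Nonempty X] {f : X → A} {g : X → B} (hf : Surjective f)
    (hg : Surjective g) (hconn : ∀ x y, Relation.EqvGen (fun x y => f x = f y ∨ g x = g y) x y) :
    (incidenceGraph f g).Connected := by
  set G := incidenceGraph f g
  have hinl : ∀ x y, G.Reachable (.inl (f x)) (.inl (f y)) := fun x y => by
    induction hconn x y with
    | rel x y hxy =>
      rcases hxy with hf | hg
      · rw [hf]
      · exact (incidenceGraph_adj f g x).reachable.trans
          (hg ▸ (incidenceGraph_adj f g y).reachable.symm)
    | refl => rfl
    | symm _ _ _ ih => exact ih.symm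
    | trans _ _ _ _ _ ih₁ ih₂ => exact ih₁.trans ih₂
  have hvert : ∀ u, ∃ x, G.Reachable (.inl (f x)) u := by
    rintro (a | b)
    · obtain ⟨x, rfl⟩ := hf a
      exact ⟨x, .refl _⟩
    · obtain ⟨x, rfl⟩ := hg b
      exact ⟨x, (incidenceGraph_adj f g x).reachable⟩
  obtain ⟨x₀⟩ := ‹Nonempty X›
  have : Nonempty (A ⊕ B) := ⟨.inl (f x₀)⟩
  refine ⟨fun u v => ?_⟩
  obtain ⟨x, hx⟩ := hvert u
  obtain ⟨y, hy⟩ := hvert v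
  exact hx.symm.trans ((hinl x y).trans hy)

theorem card_add_card_le_card_range_add_one [Finite X] [Nonempty X] {f : X → A} {g : X → B}
    (hf : Surjective f) (hg : Surjective g)
    (hconn : ∀ x y, Relation.EqvGen (fun x y => f x = f y ∨ g x = g y) x y) :
    Nat.card A + Nat.card B ≤ Nat.card (Set.range fun x => (f x, g x)) + 1 := by
  have : Finite A := Finite.of_surjective f hf
  have : Finite B := Finite.of_surjective g hg
  have := (incidenceGraph_connected hf hg hconn).card_vert_le_card_edgeSet_add_one
  rw [Nat.card_sum] at this
  linarith [card_edgeSet_incidenceGraph_le f g]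

end IncidenceGraph

namespace ThreeSkeleton

instance (Sk : ThreeSkeleton) : Fintype Sk.E := Sk.fintypeE

variable {Sk : ThreeSkeleton}

lemma z_mem_closure (Sk : ThreeSkeleton) : Sk.z ∈ closure {Sk.op, Sk.nx} :=
  mul_mem (inv_mem (Subgroup.subset_closure (by simp))) (Subgroup.subset_closure (by simp))

lemma nx_nx_ne (e : Sk.E) : Sk.nx (Sk.nx e) ≠ e := fun h => by
  have h3 := Sk.nx_order e
  rw [h] at h3
  exact Sk.nx_free e h3

lemma op_eq_nx_of_z_eq {e : Sk.E} (he : Sk.z e = e) : Sk.op e = Sk.nx e :=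
  (Equiv.symm_apply_eq _).1 he

lemma z_op_ne_of_z_eq {e : Sk.E} (he : Sk.z e = e) : Sk.z (Sk.op e) ≠ Sk.op e := fun h =>
  nx_nx_ne e (by rw [← op_eq_nx_of_z_eq he, ← op_eq_nx_of_z_eq h, Sk.op_invol])

lemma commute_of_mem_closure {φ γ : Perm Sk.E} (hφ : φ ∈ ribbonAut Sk)
    (hγ : γ ∈ closure {Sk.op, Sk.nx}) : Commute φ γ :=
  mem_centralizer_iff.1 (closure_le_centralizer_centralizer _ hγ) φ hφ

lemma eq_one_of_mem_ribbonAut {φ : Perm Sk.E} (hφ : φ ∈ ribbonAut Sk) {e : Sk.E}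
    (he : φ e = e) : φ = 1 :=
  Perm.eq_one_of_mem_centralizer_of_apply_eq_self Sk.connected hφ he

lemma eq_of_mem_ribbonAut {φ χ : Perm Sk.E} (hφ : φ ∈ ribbonAut Sk) (hχ : χ ∈ ribbonAut Sk)
    {e : Sk.E} (he : φ e = χ e) : φ = χ :=
  (inv_mul_eq_one.1 <| eq_one_of_mem_ribbonAut (mul_mem (inv_mem hχ) hφ) (e := e) <| by
    simp [he]).symm

lemma card_dvd_card_subtype {K : Subgroup (Perm Sk.E)} (hK : K ≤ ribbonAut Sk)
    {p : Sk.E → Prop} (hp : ∀ φ ∈ K, ∀ e, p (φ e) ↔ p e) : Nat.card K ∣ Nat.card {e // p e} :=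
  card_dvd_card_subtype_of_free (fun g _ hg => Subtype.ext (eq_one_of_mem_ribbonAut (hK g.2) hg))
    fun g => hp g g.2

lemma card_dvd_card_fixed_z {K : Subgroup (Perm Sk.E)} (hK : K ≤ ribbonAut Sk) :
    Nat.card K ∣ Nat.card {e // Sk.z e = e} :=
  card_dvd_card_subtype hK fun φ hφ e => by
    rw [← Perm.mul_apply, ← (commute_of_mem_closure (hK hφ) Sk.z_mem_closure).eq,
      Perm.mul_apply, φ.injective.eq_iff]

/- The quotient of `Sk` by an involutive automorphism `ψ`: its vertices are the `nxMod`-orbits,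
its edges the `opMod`-orbits, and the edges fixed by `opMod` are those that `ψ` flips. -/
abbrev EndsMod (ψ : Perm Sk.E) : Type := orbitRel.Quotient (zpowers ψ) Sk.E

section Involution

variable {ψ : Perm Sk.E}

lemma commute_op (hψ : ψ ∈ ribbonAut Sk) : Commute Sk.op ψ :=
  (commute_of_mem_closure hψ (Subgroup.subset_closure (by simp))).symm

lemma commute_nx (hψ : ψ ∈ ribbonAut Sk) : Commute Sk.nx ψ :=
  (commute_of_mem_closure hψ (Subgroup.subset_closure (by simp))).symm

def opMod (hψ : ψ ∈ ribbonAut Sk) : Perm (EndsMod ψ) := ψ.descend Sk.op (commute_op hψ)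

def nxMod (hψ : ψ ∈ ribbonAut Sk) : Perm (EndsMod ψ) := ψ.descend Sk.nx (commute_nx hψ)

def vertexMod (hψ : ψ ∈ ribbonAut Sk) (e : Sk.E) :
    orbitRel.Quotient (zpowers (nxMod hψ)) (EndsMod ψ) :=
  Quotient.mk _ (Quotient.mk _ e)

def edgeMod (hψ : ψ ∈ ribbonAut Sk) (e : Sk.E) :
    orbitRel.Quotient (zpowers (opMod hψ)) (EndsMod ψ) :=
  Quotient.mk _ (Quotient.mk _ e)

lemma vertexMod_nx (hψ : ψ ∈ ribbonAut Sk) (e : Sk.E) :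
    vertexMod hψ (Sk.nx e) = vertexMod hψ e :=
  Perm.mk_apply_eq_mk (nxMod hψ) (Quotient.mk _ e)

lemma edgeMod_op (hψ : ψ ∈ ribbonAut Sk) (e : Sk.E) : edgeMod hψ (Sk.op e) = edgeMod hψ e :=
  Perm.mk_apply_eq_mk (opMod hψ) (Quotient.mk _ e)

lemma vertexMod_apply (hψ : ψ ∈ ribbonAut Sk) (e : Sk.E) :
    vertexMod hψ (ψ e) = vertexMod hψ e :=
  congrArg (Quotient.mk _) (Perm.mk_apply_eq_mk ψ e)

lemma edgeMod_apply (hψ : ψ ∈ ribbonAut Sk) (e : Sk.E) : edgeMod hψ (ψ e) = edgeMod hψ e :=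
  congrArg (Quotient.mk _) (Perm.mk_apply_eq_mk ψ e)

lemma eq_one_of_smul_eq_self (hψ : ψ ∈ ribbonAut Sk) (g : zpowers ψ) (e : Sk.E)
    (hg : g • e = e) : g = 1 :=
  Subtype.ext (eq_one_of_mem_ribbonAut (zpowers_le.2 hψ g.2) hg)

lemma mk_eq_mk_iff (hψ2 : ψ ^ 2 = 1) (a b : Sk.E) :
    (Quotient.mk _ a : EndsMod ψ) = Quotient.mk _ b ↔ a = b ∨ a = ψ b :=
  Quotient.eq.trans (Perm.orbitRel_zpowers_iff_of_sq_eq_one hψ2 a b)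

lemma nx_ne_apply (hψ : ψ ∈ ribbonAut Sk) (hψ2 : ψ ^ 2 = 1) (e : Sk.E) : Sk.nx e ≠ ψ e :=
  fun h => nx_nx_ne e <| by
    rw [h, ← Perm.mul_apply, (commute_nx hψ).eq, Perm.mul_apply, h, ← Perm.mul_apply, ← sq, hψ2,
      Perm.one_apply]

lemma card_endsMod_eq_three_mul (hψ : ψ ∈ ribbonAut Sk) (hψ2 : ψ ^ 2 = 1) :
    Nat.card (EndsMod ψ) =
      3 * Nat.card (orbitRel.Quotient (zpowers (nxMod hψ)) (EndsMod ψ)) := by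
  refine Perm.card_eq_prime_mul_card_orbits_zpowers ?_ fun q => ?_
  · ext q
    induction q using Quotient.ind with | _ e => ?_
    simp [pow_succ, nxMod, Sk.nx_order]
  · induction q using Quotient.ind with | _ e => ?_
    exact fun h => ((mk_eq_mk_iff hψ2 _ _).1 h).elim (Sk.nx_free e) (nx_ne_apply hψ hψ2 e)

lemma two_mul_card_edgesMod (hψ : ψ ∈ ribbonAut Sk) :
    2 * Nat.card (orbitRel.Quotient (zpowers (opMod hψ)) (EndsMod ψ)) =
      Nat.card (EndsMod ψ) + Nat.card {q // opMod hψ q = q} := by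
  refine Perm.two_mul_card_orbits_zpowers ?_
  ext q
  induction q using Quotient.ind with | _ e => ?_
  simp [sq, opMod, Sk.op_invol]

lemma card_eq_two_mul_card_endsMod (hψ : ψ ∈ ribbonAut Sk) (hψ2 : ψ ^ 2 = 1) (hψ1 : ψ ≠ 1) :
    Nat.card Sk.E = 2 * Nat.card (EndsMod ψ) :=
  Perm.card_eq_prime_mul_card_orbits_zpowers hψ2 fun _ he => hψ1 (eq_one_of_mem_ribbonAut hψ he)

lemma card_flipped_eq_two_mul (hψ : ψ ∈ ribbonAut Sk) (hψ2 : ψ ^ 2 = 1) (hψ1 : ψ ≠ 1) :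
    Nat.card {e // Sk.op e = ψ e} = 2 * Nat.card {q // opMod hψ q = q} := by
  have hflip (e : Sk.E) : opMod hψ (Quotient.mk _ e) = Quotient.mk _ e ↔ Sk.op e = ψ e :=
    (mk_eq_mk_iff hψ2 _ _).trans (or_iff_right (Sk.op_free e))
  rw [← Nat.card_congr (Equiv.subtypeEquivRight hflip),
    card_subtype_mk_eq_of_free (eq_one_of_smul_eq_self hψ) fun q => opMod hψ q = q,
    Nat.card_zpowers, orderOf_eq_prime hψ2 hψ1, mul_comm]

lemma two_mul_card_range_add_le (hψ : ψ ∈ ribbonAut Sk) (hψ1 : ψ ≠ 1) :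
    2 * Nat.card (Set.range fun e => (vertexMod hψ e, edgeMod hψ e)) +
      Nat.card {e // Sk.z e = e} ≤ Nat.card Sk.E := by
  classical
  -- `e` and `ψ e` give the same incidence, and so do the loop end `e` (with `z e = e`) and `op e`.
  set h : Sk.E → _ := fun e => (vertexMod hψ e, edgeMod hψ e)
  have hrange : Set.range h ⊆ h '' {e | Sk.z e ≠ e} := by
    rintro _ ⟨e, rfl⟩
    by_cases he : Sk.z e = e
    · refine ⟨Sk.op e, z_op_ne_of_z_eq he, ?_⟩
      simp only [h, edgeMod_op]
      rw [op_eq_nx_of_z_eq he, vertexMod_nx]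
    · exact ⟨e, he, rfl⟩
  have himage := two_mul_card_image_le (ψ := ψ) (h := h)
    (fun e he => hψ1 (eq_one_of_mem_ribbonAut hψ he))
    (fun e => by simp only [h, vertexMod_apply, edgeMod_apply])
    (T := {e | Sk.z e ≠ e}) fun e he hz => he <| ψ.injective <| by
      rw [← hz, ← Perm.mul_apply, ← Perm.mul_apply,
        (commute_of_mem_closure hψ Sk.z_mem_closure).eq]
  have hcompl : Nat.card {e // Sk.z e = e} + Nat.card {e // Sk.z e ≠ e} = Nat.card Sk.E := by
    rw [← Nat.card_sum]
    exact Nat.card_congr (Equiv.sumCompl _)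
  have := Nat.card_mono (Set.toFinite _) hrange
  change 2 * Nat.card (h '' {e | Sk.z e ≠ e}) ≤ Nat.card {e // Sk.z e ≠ e} at himage
  omega

lemma card_verticesMod_add_card_edgesMod_le (hψ : ψ ∈ ribbonAut Sk) [Nonempty Sk.E] :
    Nat.card (orbitRel.Quotient (zpowers (nxMod hψ)) (EndsMod ψ)) +
        Nat.card (orbitRel.Quotient (zpowers (opMod hψ)) (EndsMod ψ)) ≤
      Nat.card (Set.range fun e => (vertexMod hψ e, edgeMod hψ e)) + 1 := by
  refine card_add_card_le_card_range_add_one (Quotient.mk_surjective.comp Quotient.mk_surjective)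
    (Quotient.mk_surjective.comp Quotient.mk_surjective) fun x y => ?_
  obtain ⟨γ, hγ, rfl⟩ := Sk.connected x y
  refine (Relation.EqvGen.is_equivalence _).apply_of_mem_closure ?_ hγ x
  rintro γ (rfl | rfl) e
  · exact .rel _ _ (.inr (edgeMod_op hψ e).symm)
  · exact .rel _ _ (.inl (vertexMod_nx hψ e).symm)

end Involution

end ThreeSkeleton

namespace IsPseudoTree

open ThreeSkeleton

variable {Sk : ThreeSkeleton}

lemma card_ribbonAut_dvd_six (h : IsPseudoTree Sk) : Nat.card (ribbonAut Sk) ∣ 6 := by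
  have hE : Nat.card (ribbonAut Sk) ∣ Nat.card Sk.E := by
    simpa using card_dvd_card_subtype le_rfl (p := fun _ : Sk.E => True) fun _ _ _ => Iff.rfl
  refine (Nat.dvd_add_right hE).1 ?_
  rw [← h.2]
  exact dvd_mul_of_dvd_right (card_dvd_card_fixed_z le_rfl) 6

lemma commute_of_mem_ribbonAut (h : IsPseudoTree Sk) {φ χ : Perm Sk.E}
    (hφ : φ ∈ ribbonAut Sk) (hχ : χ ∈ ribbonAut Sk) : Commute φ χ := by
  obtain ⟨e₀, hz₀, hface⟩ := h.1
  have hsame : ∀ φ ∈ ribbonAut Sk, Sk.z.SameCycle e₀ (φ e₀) := fun φ hφ =>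
    (hface (φ e₀)).resolve_left fun hfix => hz₀ <| φ.injective <| by
      rw [← Perm.mul_apply, (commute_of_mem_closure hφ Sk.z_mem_closure).eq,
        Perm.mul_apply, hfix]
  refine eq_of_mem_ribbonAut (mul_mem hφ hχ) (mul_mem hχ hφ) (e := e₀) ?_
  exact Perm.SameCycle.apply_apply_comm
    (commute_of_mem_closure hφ Sk.z_mem_closure)
    (commute_of_mem_closure hχ Sk.z_mem_closure) (hsame φ hφ) (hsame χ hχ)

theorem card_flipped_eq_two (h : IsPseudoTree Sk) {ψ : Perm Sk.E}
    (hψ : ψ ∈ ribbonAut Sk) (hψ2 : ψ ^ 2 = 1) (hψ1 : ψ ≠ 1) :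
    Nat.card {e // Sk.op e = ψ e} = 2 := by
  have : Nonempty Sk.E := let ⟨e₀, _⟩ := h.1; ⟨e₀⟩
  have hF : 2 ∣ Nat.card {e // Sk.z e = e} := by
    simpa [Nat.card_zpowers, orderOf_eq_prime hψ2 hψ1]
      using card_dvd_card_fixed_z (zpowers_le.2 hψ)
  have hEuler := h.2
  have hconnected := card_verticesMod_add_card_edgesMod_le hψ
  have hincidences := two_mul_card_range_add_le hψ hψ1
  have hends := card_eq_two_mul_card_endsMod hψ hψ2 hψ1
  have hvertices := card_endsMod_eq_three_mul hψ hψ2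
  have hedges := two_mul_card_edgesMod hψ
  have hflipped := card_flipped_eq_two_mul hψ hψ2 hψ1
  omega

theorem card_ribbonAut_dvd_two (h : IsPseudoTree Sk)
    (h2 : 2 ∣ Nat.card (ribbonAut Sk)) : Nat.card (ribbonAut Sk) ∣ 2 := by
  obtain ⟨ψ, hψ⟩ := exists_prime_orderOf_dvd_card' 2 h2
  rw [← Subgroup.orderOf_coe] at hψ
  have hψ2 : (ψ : Perm Sk.E) ^ 2 = 1 := hψ ▸ pow_orderOf_eq_one _
  have hψ1 : (ψ : Perm Sk.E) ≠ 1 := fun h1 => by simp [h1] at hψ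
  rw [← h.card_flipped_eq_two ψ.2 hψ2 hψ1]
  refine card_dvd_card_subtype le_rfl fun φ hφ e => ?_
  rw [← Perm.mul_apply, ← Perm.mul_apply,
    ← (commute_of_mem_closure hφ (Subgroup.subset_closure (by simp))).eq,
    ← (h.commute_of_mem_ribbonAut hφ ψ.2).eq, Perm.mul_apply, Perm.mul_apply, φ.injective.eq_iff]

end IsPseudoTree

theorem stmt_15 (Sk : ThreeSkeleton) (h : IsPseudoTree Sk) :
    Nat.card (ribbonAut Sk) ≤ 3 ∧
    ∀ φ ∈ ribbonAut Sk, ∀ e : Sk.E, φ e = e → φ = 1 := by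
  refine ⟨?_, fun φ hφ _ => ThreeSkeleton.eq_one_of_mem_ribbonAut hφ⟩
  by_cases h2 : 2 ∣ Nat.card (ribbonAut Sk)
  · exact (Nat.le_of_dvd two_pos (h.card_ribbonAut_dvd_two h2)).trans (by norm_num)
  · have hodd : Nat.Coprime (Nat.card (ribbonAut Sk)) 2 :=
      Nat.coprime_comm.1 ((Nat.Prime.coprime_iff_not_dvd Nat.prime_two).2 h2)
    exact Nat.le_of_dvd three_pos (hodd.dvd_of_dvd_mul_right h.card_ribbonAut_dvd_six)
end
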